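/- Let D be a division ring, A ∈ D^{n×n} invertible, u ∈ D^{1×n}, v ∈ D^{n×1} with f = u A⁻¹ v ≠ 0. Then the (n+1)×(n+1) matrix A' = [[Σ v, −Σ A Σ],[0, u Σ]] is invertible and e_1 (A')⁻¹ e_{n+1} = f⁻¹, where Σ = Σ_n is the order-reversing permutation matrix. -/

import Mathlib

/-!
Up to reversing the `Fin n`-indices of rows and columns, `A'` is the bordered matrix
`[[v, -A], [0, u]]`. With `B = A⁻¹` and `F = (u B v)⁻¹`, its inverse is
`[[F u B, F], [B v F u B - B, B v F]]`: each block identity reduces to `A B = 1` and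
`(u B v) F = 1` on one side, to `B A = 1` and `F (u B v) = 1` on the other. Reversing indices
is a reindexing by a permutation, which preserves two-sided inverses, and the corner entry of the
inverse is `F = f⁻¹`.
-/

namespace Matrix

theorem submatrix_mul_submatrix_eq_one {R l m o p : Type*} [NonAssocSemiring R] [Fintype o]
    [Fintype p] [DecidableEq l] [DecidableEq m] {M : Matrix m o R} {N : Matrix o m R}
    (h : M * N = 1) (e : l ≃ m) (e' : p ≃ o) : M.submatrix e e' * N.submatrix e' e = 1 := by
  rw [submatrix_mul_equiv, h, submatrix_one_equiv]

variable {R m o : Type*} [Ring R]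

def bordered (A : Matrix m m R) (u : Matrix o m R) (v : Matrix m o R) :
    Matrix (m ⊕ o) (o ⊕ m) R :=
  fromBlocks v (-A) 0 u

variable [Fintype m] [Fintype o]

def borderedInv (B : Matrix m m R) (u : Matrix o m R) (v : Matrix m o R) (F : Matrix o o R) :
    Matrix (o ⊕ m) (m ⊕ o) R :=
  fromBlocks (F * u * B) F (B * v * F * u * B - B) (B * v * F)

variable [DecidableEq m] [DecidableEq o]

theorem bordered_mul_borderedInv {A B : Matrix m m R} {u : Matrix o m R} {v : Matrix m o R}
    {F : Matrix o o R} (hAB : A * B = 1) (hF : u * B * v * F = 1) :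
    bordered A u v * borderedInv B u v F = 1 := by
  rw [bordered, borderedInv, fromBlocks_multiply, ← fromBlocks_one, fromBlocks_inj]
  simp only [Matrix.mul_sub, Matrix.neg_mul, Matrix.zero_mul, ← Matrix.mul_assoc, hAB, hF,
    Matrix.one_mul]
  refine ⟨?_, ?_, ?_, ?_⟩ <;> abel

theorem borderedInv_mul_bordered {A B : Matrix m m R} {u : Matrix o m R} {v : Matrix m o R}
    {F : Matrix o o R} (hBA : B * A = 1) (hF : F * (u * B * v) = 1) :
    borderedInv B u v F * bordered A u v = 1 := by
  rw [bordered, borderedInv, fromBlocks_multiply, ← fromBlocks_one, fromBlocks_inj]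
  simp only [Matrix.mul_assoc] at hF
  simp only [Matrix.sub_mul, Matrix.mul_neg, Matrix.mul_zero, Matrix.mul_assoc, hBA, hF,
    Matrix.mul_one]
  refine ⟨?_, ?_, ?_, ?_⟩ <;> abel

end Matrix

open Matrix in
/-- Minimal inverse, type (0,0): if `f = u A⁻¹ v ≠ 0` over a division ring, then the
`(n+1)×(n+1)` matrix `A' = [[Σ v, −Σ A Σ],[0, u Σ]]` is invertible and
`e_1 (A')⁻¹ e_{n+1} = f⁻¹` (where `Σ = Σ_n` reverses the order of rows/columns). -/
theorem stmt15 {D : Type*} [DivisionRing D] {n : ℕ}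
    (A Ainv : Matrix (Fin n) (Fin n) D) (hA : A * Ainv = 1 ∧ Ainv * A = 1)
    (u : Matrix (Fin 1) (Fin n) D) (v : Matrix (Fin n) (Fin 1) D)
    (f : D) (hf : f = (u * Ainv * v) 0 0) (hf0 : f ≠ 0)
    (A' : Matrix (Fin n ⊕ Fin 1) (Fin 1 ⊕ Fin n) D)
    (hA' : A' = Matrix.of fun i j =>
      match i, j with
      | .inl i, .inl _ => v i.rev 0
      | .inl i, .inr j => -(A i.rev j.rev)
      | .inr _, .inl _ => 0
      | .inr _, .inr j => u 0 j.rev) :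
    ∃ C : Matrix (Fin 1 ⊕ Fin n) (Fin n ⊕ Fin 1) D,
      A' * C = 1 ∧ C * A' = 1 ∧ C (Sum.inl 0) (Sum.inr 0) = f⁻¹ := by
  obtain ⟨hAB, hBA⟩ := hA
  have huBv : u * Ainv * v = f • 1 := by
    ext i j
    simp [Fin.fin_one_eq_zero i, Fin.fin_one_eq_zero j, hf]
  let rowRev : Fin n ⊕ Fin 1 ≃ Fin n ⊕ Fin 1 := Equiv.sumCongr Fin.revPerm (Equiv.refl _)
  let colRev : Fin 1 ⊕ Fin n ≃ Fin 1 ⊕ Fin n := Equiv.sumCongr (Equiv.refl _) Fin.revPerm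
  have hA'_eq : A' = (bordered A u v).submatrix rowRev colRev := by
    subst hA'
    ext (i | i) (j | j) <;> simp [bordered, rowRev, colRev, Fin.fin_one_eq_zero]
  refine ⟨(borderedInv Ainv u v (f⁻¹ • 1)).submatrix colRev rowRev, ?_, ?_, ?_⟩
  · rw [hA'_eq]
    refine submatrix_mul_submatrix_eq_one (bordered_mul_borderedInv hAB ?_) _ _
    simp [huBv, smul_smul, mul_inv_cancel₀ hf0]
  · rw [hA'_eq]
    refine submatrix_mul_submatrix_eq_one (borderedInv_mul_bordered hBA ?_) _ _
    simp [huBv, smul_smul, inv_mul_cancel₀ hf0]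
  · simp [borderedInv, rowRev, colRev]
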